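/- Let $R$ be a local Artin ring and suppose given $R$-modules $F, G, H$ with $G, H$ free and finitely generated, maps $\psi: F \to G$, $\eta: G \to H$ with $\varphi = \eta \circ \psi$, such that $\ker\eta$ and $\operatorname{coker}\eta$ are free and $\operatorname{im}\psi \cap \ker\eta = 0$. Then $\operatorname{coker}\varphi$ is free if and only if $\operatorname{coker}\psi$ is free. -/

import Mathlib

/-!
The cokernel of `φ` is an extension of `coker η` by `im η / im φ ≅ G ⧸ (im ψ + ker η)`, and
`G ⧸ (im ψ + ker η)` is the quotient of `coker ψ` by the image of `ker η`, which is isomorphic to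
`ker η` because `im ψ ∩ ker η = 0`. Extensions with free quotient split, so over a local ring
`coker φ` is free iff `G ⧸ (im ψ + ker η)` is. It remains to see that `coker ψ` is free iff its
quotient by the free submodule `ker η` is. The nontrivial direction holds because, over an
Artinian local ring, a free submodule of a finite free module has free quotient: a nonzero
`s` with `𝔪 s = 0` kills `𝔪 M` but no element of a free module outside `𝔪 • ⊤`, so the inclusion
stays injective after tensoring with the residue field.
-/

open IsLocalRing Module Submodule

section

variable {R : Type*} [CommRing R]

theorem IsArtinianRing.exists_ne_zero_forall_mem_maximalIdeal_mul_eq_zero [IsLocalRing R]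
    [IsArtinianRing R] : ∃ s : R, s ≠ 0 ∧ ∀ a ∈ maximalIdeal R, a * s = 0 := by
  -- every prime is maximal, so the associated prime of `R` is `𝔪 = ann s` for some `s`
  obtain ⟨P, hP⟩ := associatedPrimes.nonempty R R
  obtain ⟨hprime, s, rfl⟩ := isAssociatedPrime_iff.mp hP
  have hmax : (⊥ : Ideal R).colon {s} = maximalIdeal R :=
    eq_maximalIdeal (IsArtinianRing.isMaximal_of_isPrime _)
  refine ⟨s, ?_, fun a ha => ?_⟩
  · rintro rfl
    exact hprime.ne_top (by simp)
  · simpa [← hmax, mem_colon_singleton] using ha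

variable {M N : Type*} [AddCommGroup M] [Module R M] [AddCommGroup N] [Module R N]

theorem Submodule.smul_eq_zero_of_mem_ideal_smul_top {I : Ideal R} {s : R}
    (hs : ∀ a ∈ I, a * s = 0) {x : M} (hx : x ∈ I • (⊤ : Submodule R M)) : s • x = 0 :=
  Submodule.smul_induction_on hx (fun a ha y _ => by rw [smul_smul, mul_comm, hs a ha, zero_smul])
    (fun y z hy hz => by rw [smul_add, hy, hz, add_zero])

theorem Module.Free.mem_maximalIdeal_smul_top_of_smul_eq_zero [IsLocalRing R] [Module.Free R M]
    {s : R} (hs : s ≠ 0) {x : M} (hx : s • x = 0) :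
    x ∈ maximalIdeal R • (⊤ : Submodule R M) := by
  let b := Module.Free.chooseBasis R M
  have hcoord (i) : b.repr x i ∈ maximalIdeal R := by
    by_contra hi
    have : s * b.repr x i = 0 := by simpa using congr(b.repr $hx i)
    exact hs ((notMem_maximalIdeal.mp hi).mul_left_eq_zero.mp this)
  rw [← b.span_eq, mem_ideal_smul_span_iff_exists_sum]
  exact ⟨b.repr x, hcoord, b.linearCombination_repr x⟩

theorem Module.Free.comap_maximalIdeal_smul_top_le [IsLocalRing R] [IsArtinianRing R]
    [Module.Free R M] {l : M →ₗ[R] N} (hl : Function.Injective l) :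
    (maximalIdeal R • ⊤ : Submodule R N).comap l ≤ maximalIdeal R • ⊤ := by
  obtain ⟨s, hs, hsm⟩ := IsArtinianRing.exists_ne_zero_forall_mem_maximalIdeal_mul_eq_zero (R := R)
  intro x hx
  refine mem_maximalIdeal_smul_top_of_smul_eq_zero hs (hl ?_)
  rw [map_smul, map_zero]
  exact smul_eq_zero_of_mem_ideal_smul_top hsm hx

theorem LinearMap.injective_lTensor_quotient_iff (I : Ideal R) (l : M →ₗ[R] N) :
    Function.Injective (l.lTensor (R ⧸ I)) ↔ (I • ⊤ : Submodule R N).comap l ≤ I • ⊤ := by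
  have hcomm : TensorProduct.quotTensorEquivQuotSMul N I ∘ₗ l.lTensor (R ⧸ I) =
      (I • ⊤ : Submodule R M).mapQ (I • ⊤) l (smul_top_le_comap_smul_top I l) ∘ₗ
        TensorProduct.quotTensorEquivQuotSMul M I := by
    ext x
    simp
  rw [← EquivLike.comp_injective _ (TensorProduct.quotTensorEquivQuotSMul N I),
    ← LinearEquiv.coe_coe, ← LinearMap.coe_comp, hcomm, LinearMap.coe_comp, LinearEquiv.coe_coe,
    EquivLike.injective_comp, ← LinearMap.ker_eq_bot, ker_mapQ, ← LinearMap.le_ker_iff_map,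
    ker_mkQ]

theorem Submodule.free_quotient_of_free [IsLocalRing R] [IsArtinianRing R] [Module.Finite R M]
    [Module.Free R M] (p : Submodule R M) [Module.Free R p] : Module.Free R (M ⧸ p) :=
  free_of_lTensor_residueField_injective p.subtype p.mkQ p.mkQ_surjective
    (LinearMap.exact_subtype_mkQ p) ((p.subtype.injective_lTensor_quotient_iff _).mpr
      (Module.Free.comap_maximalIdeal_smul_top_le p.injective_subtype))

theorem Submodule.free_of_free_of_free_quotient (p : Submodule R M) [Module.Free R p]
    [Module.Free R (M ⧸ p)] : Module.Free R M := by
  obtain ⟨l, hl⟩ := projective_lifting_property p.mkQ LinearMap.id p.mkQ_surjective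
  exact .of_equiv ((LinearMap.exact_subtype_mkQ p).splitSurjectiveEquiv p.injective_subtype
    ⟨l, hl⟩).1.symm

theorem Submodule.projective_of_projective_quotient (p : Submodule R M) [Module.Projective R M]
    [Module.Projective R (M ⧸ p)] : Module.Projective R p := by
  obtain ⟨l, hl⟩ := projective_lifting_property p.mkQ LinearMap.id p.mkQ_surjective
  have hsplit := (Function.Exact.split_tfae (LinearMap.exact_subtype_mkQ p) p.injective_subtype
    p.mkQ_surjective).out 0 1
  obtain ⟨r, hr⟩ := hsplit.mp ⟨l, hl⟩
  exact .of_split p.subtype r hr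

theorem Submodule.free_iff_free_of_free_quotient [IsLocalRing R] [IsNoetherianRing R]
    [Module.Finite R M] (p : Submodule R M) [Module.Free R (M ⧸ p)] :
    Module.Free R M ↔ Module.Free R p := by
  refine ⟨fun _ => ?_, fun _ => p.free_of_free_of_free_quotient⟩
  have := p.projective_of_projective_quotient
  exact free_of_flat_of_isLocalRing

theorem Submodule.free_iff_free_quotient_of_free [IsLocalRing R] [IsArtinianRing R]
    [Module.Finite R M] (p : Submodule R M) [Module.Free R p] :
    Module.Free R M ↔ Module.Free R (M ⧸ p) :=
  ⟨fun _ => p.free_quotient_of_free, fun _ => p.free_of_free_of_free_quotient⟩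

noncomputable def Submodule.mapMkQEquivOfDisjoint {p q : Submodule R M} (h : Disjoint p q) :
    q.map p.mkQ ≃ₗ[R] q :=
  (LinearEquiv.ofInjective (p.mkQ ∘ₗ q.subtype) (by
      rw [← LinearMap.ker_eq_bot, LinearMap.ker_comp, ker_mkQ, ← disjoint_iff_comap_eq_bot]
      exact h.symm) ≪≫ₗ
    LinearEquiv.ofEq _ _ (by rw [LinearMap.range_comp, range_subtype])).symm

noncomputable def LinearMap.mapRangeMkQEquiv (η : M →ₗ[R] N) (p : Submodule R M) :
    (range η).map (p.map η).mkQ ≃ₗ[R] M ⧸ p ⊔ ker η :=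
  (quotEquivOfEq _ _ (by rw [ker_comp, ker_mkQ, comap_map_eq]) ≪≫ₗ
    ((p.map η).mkQ ∘ₗ η).quotKerEquivRange ≪≫ₗ LinearEquiv.ofEq _ _ (range_comp _ _)).symm

end

theorem coker_comp_free_iff_general
    (R : Type*) [CommRing R] [IsLocalRing R] [IsArtinianRing R]
    (F G H : Type*) [AddCommGroup F] [Module R F]
    [AddCommGroup G] [Module R G] [Module.Finite R G]
    [AddCommGroup H] [Module R H] [Module.Finite R H]
    (ψ : F →ₗ[R] G) (η : G →ₗ[R] H)
    (hker : Module.Free R (LinearMap.ker η))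
    (hcoker : Module.Free R (H ⧸ LinearMap.range η))
    (hint : LinearMap.range ψ ⊓ LinearMap.ker η = ⊥) :
    Module.Free R (H ⧸ LinearMap.range (η ∘ₗ ψ)) ↔
      Module.Free R (G ⧸ LinearMap.range ψ) := by
  rw [LinearMap.range_comp]
  set T := (LinearMap.range η).map ((LinearMap.range ψ).map η).mkQ
  have : Module.Free R ((H ⧸ (LinearMap.range ψ).map η) ⧸ T) :=
    .of_equiv (quotientQuotientEquivQuotient _ _ LinearMap.map_le_range).symm
  set S := (LinearMap.ker η).map (LinearMap.range ψ).mkQ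
  have : Module.Free R S := .of_equiv (mapMkQEquivOfDisjoint (disjoint_iff.mpr hint)).symm
  rw [free_iff_free_of_free_quotient T, free_iff_free_quotient_of_free S,
    Free.iff_of_equiv (η.mapRangeMkQEquiv _),
    Free.iff_of_equiv (quotientQuotientEquivQuotientSup _ _)]

/-- **Lemma.** Let `R` be a local Artin ring, `ψ : F → G`, `η : G → H` with `G, H`
finitely generated free, `φ = η ∘ ψ`, such that `ker η` and `coker η` are free
(i.e. `η` has constant rank) and `im ψ ∩ ker η = 0`. Then `coker φ` is free if and
only if `coker ψ` is free. -/
theorem coker_comp_free_iff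
    (R : Type*) [CommRing R] [IsLocalRing R] [IsArtinianRing R]
    (F G H : Type*) [AddCommGroup F] [Module R F]
    [AddCommGroup G] [Module R G] [Module.Finite R G] [Module.Free R G]
    [AddCommGroup H] [Module R H] [Module.Finite R H] [Module.Free R H]
    (ψ : F →ₗ[R] G) (η : G →ₗ[R] H)
    (hker : Module.Free R (LinearMap.ker η))
    (hcoker : Module.Free R (H ⧸ LinearMap.range η))
    (hint : LinearMap.range ψ ⊓ LinearMap.ker η = ⊥) :
    Module.Free R (H ⧸ LinearMap.range (η ∘ₗ ψ)) ↔
      Module.Free R (G ⧸ LinearMap.range ψ) :=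
  coker_comp_free_iff_general R F G H ψ η hker hcoker hint
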